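/- Let A = (Q, E, s, F) be a Wheeler r-GNFA, let ≤ be a Wheeler order on A, and let α ∈ Σ* with α ≠ ε. Let h* be defined as in the context. If h* > |G^≺(α)|, and f is an integer with |G^≺(α)| < f ≤ |Q| such that some β ∈ I_{Q[f]} satisfies β ≺ α, then Q[f] ∈ G_⊣(α). -/

import Mathlib

/-- Strict co-lexicographic order: `α ≺ β` iff `α.reverse` is lexicographically
smaller than `β.reverse`. The empty string is the minimum. -/
def ColexLt {σ : Type*} [LinearOrder σ] (α β : List σ) : Prop :=
  List.Lex (· < ·) α.reverse β.reverse

/-- Non-strict co-lexicographic order `α ≼ β`. -/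
def ColexLe {σ : Type*} [LinearOrder σ] (α β : List σ) : Prop :=
  ColexLt α β ∨ α = β

/-- `α` is a strict suffix of `β`. -/
def IsStrictSuffix {σ : Type*} (α β : List σ) : Prop :=
  α <:+ β ∧ α ≠ β

/-- `p(α, k)`: the prefix of `α` of length `k`. -/
def pref {σ : Type*} (α : List σ) (k : ℕ) : List σ := α.take k

/-- `s(α, k)`: the suffix of `α` of length `k`. -/
def suff {σ : Type*} (α : List σ) (k : ℕ) : List σ := α.drop (α.length - k)

/-- The 1-based rank of a state in a finite linear order: `rankQ u = i` means
`u = Q[i]` in the enumeration `Q[1] < Q[2] < ⋯ < Q[|Q|]`. -/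
noncomputable def rankQ {Q : Type*} [Fintype Q] [LinearOrder Q] (u : Q) : ℕ :=
  {v : Q | v ≤ u}.ncard

/-- `Q[i, j] = {Q[i], …, Q[j]}` (empty if `i > j`). -/
def Qiv (Q : Type*) [Fintype Q] [LinearOrder Q] (i j : ℕ) : Set Q :=
  {u | i ≤ rankQ u ∧ rankQ u ≤ j}

/-- A generalized nondeterministic finite automaton: a finite set of
string-labeled edges `E ⊆ Q × Q × Σ*`, an initial state `s`, final states `F`. -/
structure GNFA (σ Q : Type*) where
  E : Finset (Q × Q × List σ)
  s : Q
  F : Finset Q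

namespace GNFA

variable {σ Q : Type*}

/-- `I A u β` means `β ∈ I_u`: `β` is obtained by concatenating the edge labels
along some path from `s` to `u` (in particular `ε ∈ I_s`). -/
inductive I (A : GNFA σ Q) : Q → List σ → Prop
  | base : I A A.s []
  | step {u v : Q} {α ρ : List σ} : I A u α → (u, v, ρ) ∈ A.E → I A v (α ++ ρ)

/-- Reachability along edges. -/
def Reach (A : GNFA σ Q) : Q → Q → Prop :=
  Relation.ReflTransGen (fun x y => ∃ ρ, (x, y, ρ) ∈ A.E)

/-- Every state is reachable from the initial state and is co-reachable
(final or allows reaching a final state). -/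
def Standard (A : GNFA σ Q) : Prop :=
  (∀ u, A.Reach A.s u) ∧ ∀ u, ∃ f ∈ A.F, A.Reach u f

/-- An ε-walk from `u` to `v`: a (possibly empty) sequence of ε-labeled edges. -/
def EpsWalk (A : GNFA σ Q) : Q → Q → Prop :=
  Relation.ReflTransGen (fun x y => (x, y, ([] : List σ)) ∈ A.E)

/-- An `r`-GNFA: all edge labels have length at most `r`. -/
def Bounded (A : GNFA σ Q) (r : ℕ) : Prop := ∀ e ∈ A.E, e.2.2.length ≤ r

/-- A GNFA without ε-transitions: every edge label is nonempty. -/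
def NoEps (A : GNFA σ Q) : Prop := ∀ e ∈ A.E, e.2.2 ≠ []

/-- `λ(u)`: the set of strings labeling some edge entering `u`. -/
def lab (A : GNFA σ Q) (u : Q) : Set (List σ) := {ρ | ∃ u', (u', u, ρ) ∈ A.E}

/-- `G_⊣(α)`: states `u` such that some `β ∈ I_u` has `α` as a suffix. -/
def Gsuf (A : GNFA σ Q) (α : List σ) : Set Q := {u | ∃ β, I A u β ∧ α <:+ β}

/-- `G*(α)`: states reached by an edge whose label has `α` as a suffix. -/
def Gstar (A : GNFA σ Q) (α : List σ) : Set Q := {u | ∃ ρ ∈ A.lab u, α <:+ ρ}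

section Colex
variable [LinearOrder σ]

/-- The preorder `u ≼_A v`. -/
def Preceq (A : GNFA σ Q) (u v : Q) : Prop :=
  ∀ α β, I A u α → I A v β →
    ¬((I A u α ∧ I A v α) ∧ (I A u β ∧ I A v β)) → ColexLt α β

/-- `G^≺(α)`: states `u` such that every `β ∈ I_u` satisfies `β ≺ α`. -/
def Gprec (A : GNFA σ Q) (α : List σ) : Set Q := {u | ∀ β, I A u β → ColexLt β α}

/-- `G^≺_⊣(α) = G^≺(α) ∪ G_⊣(α)`. -/
def GprecSuf (A : GNFA σ Q) (α : List σ) : Set Q := A.Gprec α ∪ A.Gsuf α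

/-- The linear order on `Q` is a Wheeler order on `A` (Axioms 1–4). -/
def IsWheeler [LinearOrder Q] (A : GNFA σ Q) : Prop :=
  (∀ u v : Q, u ≤ v → A.Preceq u v) ∧
  (∀ u : Q, A.s ≤ u) ∧
  (∀ u' u v' v : Q, ∀ ρ ρ' : List σ, (u', u, ρ) ∈ A.E → (v', v, ρ') ∈ A.E →
      u < v → ¬IsStrictSuffix ρ' ρ → ColexLe ρ ρ') ∧
  (∀ u' u v' v : Q, ∀ ρ : List σ, (u', u, ρ) ∈ A.E → (v', v, ρ) ∈ A.E →
      u < v → u' ≤ v')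

end Colex

section Indexed
variable [Fintype Q] [LinearOrder Q]

/-- `out(Q[1, m], ρ)`: number of edges labeled `ρ` leaving states in `Q[1, m]`. -/
noncomputable def outC (A : GNFA σ Q) (m : ℕ) (ρ : List σ) : ℕ :=
  {e : Q × Q × List σ | e ∈ A.E ∧ rankQ e.1 ≤ m ∧ e.2.2 = ρ}.ncard

/-- `in(Q[1, m], ρ)`: number of edges labeled `ρ` entering states in `Q[1, m]`. -/
noncomputable def inC (A : GNFA σ Q) (m : ℕ) (ρ : List σ) : ℕ :=
  {e : Q × Q × List σ | e ∈ A.E ∧ rankQ e.2.1 ≤ m ∧ e.2.2 = ρ}.ncard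

/-- `A_max[i]`: the largest `j` such that there is an ε-walk from `Q[j]` to `Q[i]`. -/
noncomputable def Amax (A : GNFA σ Q) (i : ℕ) : ℕ :=
  sSup {j | ∃ u v : Q, rankQ u = i ∧ rankQ v = j ∧ A.EpsWalk v u}

/-- `A_min[i]`: the smallest `j` such that there is an ε-walk from `Q[j]` to `Q[i]`. -/
noncomputable def Amin (A : GNFA σ Q) (i : ℕ) : ℕ :=
  sInf {j | ∃ u v : Q, rankQ u = i ∧ rankQ v = j ∧ A.EpsWalk v u}

variable [LinearOrder σ]

/-- `f_k = out(Q[1, |G^≺(p(α, |α|−k))|], s(α, k))`. -/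
noncomputable def fk (A : GNFA σ Q) (α : List σ) (k : ℕ) : ℕ :=
  A.outC ((A.Gprec (pref α (α.length - k))).ncard) (suff α k)

/-- `g_k = out(Q[1, |G^≺_⊣(p(α, |α|−k))|], s(α, k))`. -/
noncomputable def gk (A : GNFA σ Q) (α : List σ) (k : ℕ) : ℕ :=
  A.outC ((A.GprecSuf (pref α (α.length - k))).ncard) (suff α k)

/-- The property defining `j*` in Lemmas 2 and 4 (largest `j` satisfying it):
(i) `in(Q[1, j], s(α, k)) ≤ f_k` for every `0 < k < min{r+1, |α|}`; and
(ii) `ρ ≺ α` for every `ρ ∈ Σ^k ∩ λ(Q[h])`, every `1 ≤ h ≤ j`, every `0 < k < r+1`. -/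
def Jcond (A : GNFA σ Q) (r : ℕ) (α : List σ) (j : ℕ) : Prop :=
  (∀ k, 0 < k → k < min (r + 1) α.length → A.inC j (suff α k) ≤ A.fk α k) ∧
  (∀ k, 0 < k → k < r + 1 → ∀ h, 1 ≤ h → h ≤ j → ∀ u : Q, rankQ u = h →
      ∀ ρ : List σ, ρ.length = k → ρ ∈ A.lab u → ColexLt ρ α)

/-- The property defining `i*` (largest `i ≤ |Q|` satisfying it):
if `i ≥ 1` then `Q[i] ∈ G*(α)`. -/
def Icond (A : GNFA σ Q) (α : List σ) (i : ℕ) : Prop :=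
  1 ≤ i → ∃ u : Q, rankQ u = i ∧ u ∈ A.Gstar α

/-- The property defining `j°` (smallest `j ≤ |Q|` satisfying it):
`in(Q[1, j], s(α, k)) ≥ g_k` for every `0 < k < min{r+1, |α|}` with `g_k > f_k`. -/
def Jcond2 (A : GNFA σ Q) (r : ℕ) (α : List σ) (j : ℕ) : Prop :=
  ∀ k, 0 < k → k < min (r + 1) α.length → A.fk α k < A.gk α k →
    A.gk α k ≤ A.inC j (suff α k)

end Indexed

end GNFA

/-!
As `G^≺(α)` is downward closed in the Wheeler order, `Q[f]` lies outside it, so besides `β ≺ α`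
it carries a string `γ` with `α ≼ γ`. The hypothesis `h* > |G^≺(α)|` makes `G_⊣(α)` nonempty:
either `Q[i*]` is entered by an edge whose label ends in `α`, or some `k` has `f_k < g_k`, so an
edge labelled `s(α, k)` leaves a state of `G_⊣(p(α, |α| - k))`. Now compare `Q[f]` with a state
`v` carrying `δ` with suffix `α`. If `v ≤ Q[f]`, Axiom 1 gives `δ ∈ I_{Q[f]}`, since otherwise
`δ ≺ β ≺ α ≼ δ`. If `Q[f] < v`, either `α` is a suffix of `γ`, or `δ ≺ γ` and Axiom 1 again
gives `δ ∈ I_{Q[f]}`.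
-/

namespace List

variable {σ : Type*} [LinearOrder σ]

theorem IsPrefix.isPrefix_or_lt_of_lt {a g d : List σ} (hd : a <+: d) (h : a < g) :
    a <+: g ∨ d < g := by
  obtain ⟨t, rfl⟩ := hd
  induction h with
  | nil => exact .inl nil_prefix
  | rel hab => exact .inr (.rel hab)
  | cons _ ih => exact ih.imp (List.prefix_cons_inj _).2 .cons

theorem IsPrefix.isPrefix_or_lt_of_le {a g d : List σ} (hd : a <+: d) (h : a ≤ g) :
    a <+: g ∨ d < g := by
  rcases h.lt_or_eq with h | rfl
  · exact hd.isPrefix_or_lt_of_lt h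
  · exact .inl prefix_rfl

end List

section Colex

variable {σ : Type*} [LinearOrder σ] {a b c : List σ}

theorem colexLt_iff_reverse_lt : ColexLt a b ↔ a.reverse < b.reverse := Iff.rfl

theorem ColexLt.asymm (h : ColexLt a b) : ¬ColexLt b a :=
  lt_asymm (colexLt_iff_reverse_lt.1 h)

theorem ColexLt.trans (h : ColexLt a b) (h' : ColexLt b c) : ColexLt a c :=
  lt_trans (colexLt_iff_reverse_lt.1 h) h'

theorem ColexLt.trans_suffix (h : ColexLt a b) (hb : b <:+ c) : ColexLt a c :=
  lt_of_lt_of_le (colexLt_iff_reverse_lt.1 h) (not_lt.1 (List.reverse_prefix.2 hb).le)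

theorem suffix_or_colexLt_of_not_colexLt (hc : a <:+ c) (h : ¬ColexLt b a) :
    a <:+ b ∨ ColexLt c b := by
  simpa only [colexLt_iff_reverse_lt, List.reverse_prefix] using
    (List.reverse_prefix.2 hc).isPrefix_or_lt_of_le (not_lt.1 h)

end Colex

section Rank

variable {Q : Type*} [Fintype Q] [LinearOrder Q]

theorem rankQ_le_ncard_iff {S : Set Q} (hS : IsLowerSet S) {u : Q} :
    rankQ u ≤ S.ncard ↔ u ∈ S := by
  refine ⟨fun hu => ?_, fun hu => Set.ncard_le_ncard (hS.Iic_subset hu)⟩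
  by_contra hnot
  have hsub : S ⊆ Set.Iic u := fun v hv =>
    (le_total v u).resolve_right fun huv => hnot (hS huv hv)
  have hssub : S ⊂ Set.Iic u := (Set.ssubset_iff_of_subset hsub).2 ⟨u, le_rfl, hnot⟩
  exact (Set.ncard_lt_ncard hssub).not_ge hu

end Rank

namespace GNFA

variable {σ Q : Type*} {A : GNFA σ Q}

theorem Standard.exists_I (hA : A.Standard) (u : Q) : ∃ β, A.I u β := by
  induction hA.1 u with
  | refl => exact ⟨[], .base⟩
  | tail _ hedge ih =>
    obtain ⟨ρ, he⟩ := hedge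
    obtain ⟨β, hβ⟩ := ih
    exact ⟨β ++ ρ, hβ.step he⟩

theorem gsuf_subset_of_suffix {α α' : List σ} (h : α <:+ α') : A.Gsuf α' ⊆ A.Gsuf α :=
  fun _ ⟨β, hβ, hα'β⟩ => ⟨β, hβ, h.trans hα'β⟩

theorem mem_gsuf_append {w w' : Q} {p ρ : List σ} (hw : w ∈ A.Gsuf p)
    (he : (w, w', ρ) ∈ A.E) : w' ∈ A.Gsuf (p ++ ρ) := by
  obtain ⟨β, hβ, t, rfl⟩ := hw
  exact ⟨_, hβ.step he, t, (List.append_assoc t p ρ).symm⟩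

theorem gstar_subset_gsuf (hA : A.Standard) (α : List σ) : A.Gstar α ⊆ A.Gsuf α := by
  rintro u ⟨ρ, ⟨w, he⟩, hαρ⟩
  obtain ⟨β, hβ⟩ := hA.exists_I w
  exact gsuf_subset_of_suffix hαρ (by simpa using mem_gsuf_append ⟨β, hβ, β.nil_suffix⟩ he)

section Colex

variable [LinearOrder σ] {u v : Q} {a b : List σ}

theorem Preceq.colexLt (h : A.Preceq u v) (ha : A.I u a) (hb : A.I v b)
    (hab : ¬(A.I v a ∧ A.I u b)) : ColexLt a b :=
  h a b ha hb fun h' => hab ⟨h'.1.2, h'.2.1⟩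

theorem Preceq.mem_gsuf_of_not_mem_gprec {α : List σ} (h : A.Preceq u v)
    (hu : u ∉ A.Gprec α) (hv : v ∈ A.Gsuf α) : u ∈ A.Gsuf α := by
  obtain ⟨δ, hδ, hαδ⟩ := hv
  obtain ⟨γ, hγ, hγα⟩ : ∃ γ, A.I u γ ∧ ¬ColexLt γ α := by simpa [Gprec] using hu
  rcases suffix_or_colexLt_of_not_colexLt hαδ hγα with hαγ | hδγ
  · exact ⟨γ, hγ, hαγ⟩
  by_contra hδu
  exact hδγ.asymm (h.colexLt hγ hδ fun h' => hδu ⟨δ, h'.2, hαδ⟩)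

theorem Preceq.mem_gsuf_of_colexLt {α : List σ} (h : A.Preceq v u) (hb : A.I u b)
    (hbα : ColexLt b α) (hv : v ∈ A.Gsuf α) : u ∈ A.Gsuf α := by
  obtain ⟨δ, hδ, hαδ⟩ := hv
  by_contra hδu
  exact (hbα.trans_suffix hαδ).asymm (h.colexLt hδ hb fun h' => hδu ⟨δ, h'.1, hαδ⟩)

variable [LinearOrder Q]

theorem isLowerSet_gprec (hW : ∀ u v : Q, u ≤ v → A.Preceq u v) (hA : A.Standard)
    (α : List σ) : IsLowerSet (A.Gprec α) := by
  intro y x hxy hy γ hγ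
  by_cases hγy : A.I y γ
  · exact hy γ hγy
  obtain ⟨β, hβ⟩ := hA.exists_I y
  exact ((hW x y hxy).colexLt hγ hβ fun h => hγy h.1).trans (hy β hβ)

theorem isLowerSet_gprecSuf (hW : ∀ u v : Q, u ≤ v → A.Preceq u v) (hA : A.Standard)
    (p : List σ) : IsLowerSet (A.GprecSuf p) := by
  rintro y x hxy (hy | ⟨δ, hδ, hpδ⟩)
  · exact .inl (isLowerSet_gprec hW hA p hxy hy)
  by_cases hx : x ∈ A.Gprec p
  · exact .inl hx
  obtain ⟨γ, hγ, hγp⟩ : ∃ γ, A.I x γ ∧ ¬ColexLt γ p := by simpa [Gprec] using hx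
  refine .inr ?_
  rcases suffix_or_colexLt_of_not_colexLt hpδ hγp with hpγ | hδγ
  · exact ⟨γ, hγ, hpγ⟩
  by_contra hδx
  exact hδγ.asymm ((hW x y hxy).colexLt hγ hδ fun h => hδx ⟨δ, h.2, hpδ⟩)

end Colex

section Indexed

variable [Fintype Q] [LinearOrder Q]

theorem exists_edge_of_outC_lt {m m' : ℕ} {ρ : List σ} (h : A.outC m ρ < A.outC m' ρ) :
    ∃ w w', (w, w', ρ) ∈ A.E ∧ m < rankQ w ∧ rankQ w ≤ m' := by
  by_contra! hnone
  refine h.not_ge (Set.ncard_le_ncard ?_ (A.E.finite_toSet.subset fun e he => he.1))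
  rintro ⟨w, w', ρ'⟩ ⟨he, hw, rfl⟩
  exact ⟨he, not_lt.1 fun hlt => (hnone w w' he hlt).not_ge hw, rfl⟩

theorem gsuf_nonempty_of_fk_lt_gk [LinearOrder σ] (hW : ∀ u v : Q, u ≤ v → A.Preceq u v)
    (hA : A.Standard) {α : List σ} {k : ℕ} (h : A.fk α k < A.gk α k) :
    (A.Gsuf α).Nonempty := by
  set p := pref α (α.length - k)
  obtain ⟨w, w', he, hw_gt, hw_le⟩ := exists_edge_of_outC_lt h
  have hw_suf : w ∈ A.GprecSuf p :=
    (rankQ_le_ncard_iff (isLowerSet_gprecSuf hW hA p)).1 hw_le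
  have hw_prec : w ∉ A.Gprec p := fun hw =>
    hw_gt.not_ge ((rankQ_le_ncard_iff (isLowerSet_gprec hW hA p)).2 hw)
  have hα : p ++ suff α k = α := List.take_append_drop _ α
  exact ⟨w', hα ▸ mem_gsuf_append (hw_suf.resolve_left hw_prec) he⟩

end Indexed

end GNFA

theorem mem_gsuf_of_lt_general {σ Q : Type*} [LinearOrder σ]
    [Fintype Q] [LinearOrder Q] (A : GNFA σ Q)
    (hA : A.Standard) (hW : A.IsWheeler) (r : ℕ)
    (α : List σ)
    (istar : ℕ) (hi : A.Icond α istar)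
    (jo : ℕ)
    (hjo_min : ∀ j ≤ Fintype.card Q, A.Jcond2 r α j → jo ≤ j)
    (hgt : (A.Gprec α).ncard < max (max (A.Gprec α).ncard istar) jo)
    (f : ℕ) (hf1 : (A.Gprec α).ncard < f)
    (u : Q) (hu : rankQ u = f) (hβ : ∃ β, GNFA.I A u β ∧ ColexLt β α) :
    u ∈ A.Gsuf α := by
  have hu_prec : u ∉ A.Gprec α := fun h =>
    hf1.not_ge (hu ▸ (rankQ_le_ncard_iff (GNFA.isLowerSet_gprec hW.1 hA α)).2 h)
  have hne : (A.Gsuf α).Nonempty := by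
    simp only [lt_max_iff, lt_irrefl, false_or] at hgt
    rcases hgt with hi_pos | hjo_pos
    · obtain ⟨v, -, hv⟩ := hi (by omega)
      exact ⟨v, GNFA.gstar_subset_gsuf hA α hv⟩
    · have hcard : (A.Gprec α).ncard ≤ Fintype.card Q :=
        Nat.card_eq_fintype_card (α := Q) ▸ Set.ncard_le_card _
      have hJ : ¬A.Jcond2 r α (A.Gprec α).ncard := fun hJ => (hjo_min _ hcard hJ).not_gt hjo_pos
      simp only [GNFA.Jcond2, not_forall] at hJ
      obtain ⟨k, -, -, hk, -⟩ := hJ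
      exact GNFA.gsuf_nonempty_of_fk_lt_gk hW.1 hA hk
  obtain ⟨v, hv⟩ := hne
  obtain ⟨β, hβI, hβα⟩ := hβ
  rcases le_total u v with huv | hvu
  · exact (hW.1 u v huv).mem_gsuf_of_not_mem_gprec hu_prec hv
  · exact (hW.1 v u hvu).mem_gsuf_of_colexLt hβI hβα hv

/-- Let `A` be a Wheeler `r`-GNFA with Wheeler order `≤` and
`α ≠ ε`. With `i*`, `j°` and `h* = max{|G^≺(α)|, i*, j°}` as in the context,
if `h* > |G^≺(α)|`, `|G^≺(α)| < f ≤ |Q|` and some `β ∈ I_{Q[f]}` satisfies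
`β ≺ α`, then `Q[f] ∈ G_⊣(α)`. -/
theorem mem_gsuf_of_lt {σ Q : Type*} [Fintype σ] [LinearOrder σ]
    [Fintype Q] [LinearOrder Q] (A : GNFA σ Q)
    (hA : A.Standard) (hW : A.IsWheeler) (r : ℕ) (hr : A.Bounded r)
    (α : List σ) (hα : α ≠ [])
    (istar : ℕ) (hi_le : istar ≤ Fintype.card Q) (hi : A.Icond α istar)
    (hi_max : ∀ i ≤ Fintype.card Q, A.Icond α i → i ≤ istar)
    (jo : ℕ) (hjo_le : jo ≤ Fintype.card Q) (hjo : A.Jcond2 r α jo)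
    (hjo_min : ∀ j ≤ Fintype.card Q, A.Jcond2 r α j → jo ≤ j)
    (hgt : (A.Gprec α).ncard < max (max (A.Gprec α).ncard istar) jo)
    (f : ℕ) (hf1 : (A.Gprec α).ncard < f) (hf2 : f ≤ Fintype.card Q)
    (u : Q) (hu : rankQ u = f) (hβ : ∃ β, GNFA.I A u β ∧ ColexLt β α) :
    u ∈ A.Gsuf α :=
  mem_gsuf_of_lt_general A hA hW r α istar hi jo hjo_min hgt f hf1 u hu hβ
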